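/- (Convergence in mean square) With ξ a mixture containing μ with weight w_μ > 0, for every n: Σ_{k=1}^n Σ_{x_{1:k}} μ(x_{<k}) · (μ(x_k|x_{<k}) − ξ(x_k|x_{<k}))² ≤ H_n ≤ ln(1/w_μ) < ∞. In particular, the infinite sum over k of the μ-expected squared differences of conditional probabilities is finite. -/

import Mathlib

/-!
By the chain rule for relative entropy, `H_n` telescopes to the relative entropy of the
length-`n` marginals of `μ` and `ξ`, which is at most `ln (1 / w_μ)` because `ξ ≥ w_μ μ`
pointwise. Each conditional term of `H_n` dominates the corresponding squared Euclidean
distance: `∑ (p - q)² ≤ ½ ‖p - q‖₁² ≤ KL(p ‖ q)`, the second step being Pinsker's inequality.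
Pinsker in turn follows from the one-variable bound `3 (x - 1)² ≤ (2x + 4) (x log x - x + 1)`
and Cauchy–Schwarz. Bounded partial sums of nonnegative terms give summability.
-/

open scoped BigOperators

/-- Conditional probability ρ(a | l) := ρ(l·a)/ρ(l) via Bayes' rule. -/
noncomputable def condP {A : Type} [Fintype A] (ρ : List A → ℝ) (l : List A) (a : A) : ℝ :=
  ρ (l ++ [a]) / ρ l

/-- Cumulative expected conditional relative entropy H_n between μ and ξ. -/
noncomputable def relEnt {A : Type} [Fintype A] (μ ξ : List A → ℝ) (n : ℕ) : ℝ :=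
  ∑ k ∈ Finset.range n, ∑ x : Fin k → A, μ (List.ofFn x) *
    ∑ a : A, condP μ (List.ofFn x) a * Real.log (condP μ (List.ofFn x) a / condP ξ (List.ofFn x) a)

open Real InformationTheory

section Calculus

open Set

lemma monotoneOn_add_one_mul_log_sub :
    MonotoneOn (fun x : ℝ => (x + 1) * log x - 2 * (x - 1)) (Ioi 0) := by
  refine monotoneOn_of_hasDerivWithinAt_nonneg (convex_Ioi 0)
    (f' := fun x => log x + (x + 1) * x⁻¹ - 2) ?_ (fun x hx => ?_) (fun x hx => ?_)
  · exact ((continuousOn_id.add continuousOn_const).mul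
      (continuousOn_log.mono fun x hx => ne_of_gt hx)).sub (by fun_prop)
  · rw [interior_Ioi] at hx
    refine ((((hasDerivAt_id' x).add_const 1).fun_mul (hasDerivAt_log (ne_of_gt hx))).fun_sub
      (((hasDerivAt_id' x).sub_const 1).const_mul 2)).hasDerivWithinAt.congr_deriv ?_
    ring
  · rw [interior_Ioi] at hx
    have h1 := one_sub_inv_le_log_of_pos (mem_Ioi.mp hx)
    have h2 : (x + 1) * x⁻¹ = 1 + x⁻¹ := by field_simp [(mem_Ioi.mp hx).ne']
    linarith

lemma two_mul_sub_one_le_add_one_mul_log {x : ℝ} (hx : 1 ≤ x) : 2 * (x - 1) ≤ (x + 1) * log x := by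
  have := monotoneOn_add_one_mul_log_sub (mem_Ioi.mpr one_pos)
    (mem_Ioi.mpr (one_pos.trans_le hx)) hx
  norm_num at this
  linarith

lemma add_one_mul_log_le_two_mul_sub_one {x : ℝ} (hx₀ : 0 < x) (hx : x ≤ 1) :
    (x + 1) * log x ≤ 2 * (x - 1) := by
  have := monotoneOn_add_one_mul_log_sub (mem_Ioi.mpr hx₀) (mem_Ioi.mpr one_pos) hx
  norm_num at this
  linarith

lemma three_mul_sq_sub_one_le_klFun {x : ℝ} (hx : 0 ≤ x) :
    3 * (x - 1) ^ 2 ≤ (2 * x + 4) * klFun x := by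
  set h : ℝ → ℝ := fun x => (2 * x + 4) * klFun x - 3 * (x - 1) ^ 2
  -- `h'` has the sign of `x - 1`, so `h` is minimal at `1`.
  have hderiv : ∀ x, 0 < x → HasDerivAt h (4 * ((x + 1) * log x - 2 * (x - 1))) x := by
    intro x hx
    have hlin := ((hasDerivAt_id' x).const_mul 2).add_const 4
    refine ((hlin.fun_mul (hasDerivAt_klFun hx.ne')).fun_sub
      (((hasDerivAt_id' x).sub_const 1).fun_pow 2 |>.const_mul 3)).congr_deriv ?_
    simp only [klFun_apply]
    ring
  have hcont : Continuous h := by unfold h; fun_prop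
  have h1 : h 1 = 0 := by simp [h, klFun_one]
  suffices 0 ≤ h x by simp only [h] at this; linarith
  rcases le_total x 1 with hx1 | hx1
  · have hanti : AntitoneOn h (Icc 0 1) := by
      refine antitoneOn_of_hasDerivWithinAt_nonpos (convex_Icc 0 1) hcont.continuousOn
        (f' := fun y => 4 * ((y + 1) * log y - 2 * (y - 1))) (fun y hy => ?_) (fun y hy => ?_)
      · rw [interior_Icc] at hy
        exact (hderiv y hy.1).hasDerivWithinAt
      · rw [interior_Icc] at hy
        linarith [add_one_mul_log_le_two_mul_sub_one hy.1 hy.2.le]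
    simpa [h1] using hanti ⟨hx, hx1⟩ ⟨zero_le_one, le_rfl⟩ hx1
  · have hmono : MonotoneOn h (Ici 1) := by
      refine monotoneOn_of_hasDerivWithinAt_nonneg (convex_Ici 1) hcont.continuousOn
        (f' := fun y => 4 * ((y + 1) * log y - 2 * (y - 1))) (fun y hy => ?_) (fun y hy => ?_)
      · rw [interior_Ici] at hy
        exact (hderiv y (zero_lt_one.trans hy)).hasDerivWithinAt
      · rw [interior_Ici] at hy
        linarith [two_mul_sub_one_le_add_one_mul_log (le_of_lt hy)]
    simpa [h1] using hmono self_mem_Ici hx1 hx1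

end Calculus

open Finset

lemma mul_log_div_sub_add_eq_mul_klFun {p q : ℝ} (hp : 0 ≤ p) (hpq : 0 < p → 0 < q) :
    p * log (p / q) - p + q = q * klFun (p / q) := by
  rcases hp.eq_or_lt with rfl | hp
  · simp [klFun_zero]
  · have hq := hpq hp
    rw [klFun_apply]
    field_simp
    ring

lemma three_mul_sq_sub_le_mul_klFun {p q : ℝ} (hp : 0 ≤ p) (hq : 0 ≤ q) (hpq : 0 < p → 0 < q) :
    3 * (p - q) ^ 2 ≤ (2 * p + 4 * q) * (q * klFun (p / q)) := by
  rcases hq.eq_or_lt with rfl | hq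
  · have : p = 0 := by by_contra h; exact lt_irrefl _ (hpq (hp.lt_of_ne' h))
    simp [this]
  · have key := mul_le_mul_of_nonneg_left (three_mul_sq_sub_one_le_klFun (div_nonneg hp hq.le))
      (sq_nonneg q)
    calc 3 * (p - q) ^ 2 = q ^ 2 * (3 * (p / q - 1) ^ 2) := by field_simp
      _ ≤ q ^ 2 * ((2 * (p / q) + 4) * klFun (p / q)) := key
      _ = (2 * p + 4 * q) * (q * klFun (p / q)) := by field_simp

lemma sum_sq_le_sq_sum_abs_div_two {ι : Type*} (s : Finset ι) (d : ι → ℝ) (hd : ∑ i ∈ s, d i = 0) :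
    ∑ i ∈ s, d i ^ 2 ≤ (∑ i ∈ s, |d i|) ^ 2 / 2 := by
  classical
  have hmax : ∀ i ∈ s, 2 * |d i| ≤ ∑ j ∈ s, |d j| := by
    intro i hi
    have hrest : |d i| ≤ ∑ j ∈ s.erase i, |d j| := by
      rw [← add_sum_erase s d hi, add_eq_zero_iff_eq_neg] at hd
      rw [hd, abs_neg]
      exact abs_sum_le_sum_abs _ _
    linarith [add_sum_erase s (fun j => |d j|) hi]
  calc ∑ i ∈ s, d i ^ 2 = ∑ i ∈ s, |d i| * |d i| := by simp only [← sq, sq_abs]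
    _ ≤ ∑ i ∈ s, |d i| * ((∑ j ∈ s, |d j|) / 2) :=
        sum_le_sum fun i hi => mul_le_mul_of_nonneg_left (by linarith [hmax i hi]) (abs_nonneg _)
    _ = (∑ i ∈ s, |d i|) ^ 2 / 2 := by rw [← sum_mul]; ring

theorem pinsker {ι : Type*} (s : Finset ι) {p q : ι → ℝ} (hp : ∀ i ∈ s, 0 ≤ p i)
    (hq : ∀ i ∈ s, 0 ≤ q i) (hpq : ∀ i ∈ s, 0 < p i → 0 < q i)
    (hp1 : ∑ i ∈ s, p i = 1) (hq1 : ∑ i ∈ s, q i = 1) :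
    (∑ i ∈ s, |p i - q i|) ^ 2 ≤ 2 * ∑ i ∈ s, p i * log (p i / q i) := by
  have hkl : ∑ i ∈ s, p i * log (p i / q i) = ∑ i ∈ s, q i * klFun (p i / q i) := by
    rw [← sum_congr rfl fun i hi => mul_log_div_sub_add_eq_mul_klFun (hp i hi) (hpq i hi),
      sum_add_distrib, sum_sub_distrib, hp1, hq1, sub_add_cancel]
  -- Cauchy–Schwarz against the weights `(p i + 2 q i) / 3`, which sum to `1`.
  have hcs := sum_sq_le_sum_mul_sum_of_sq_le_mul s (r := fun i => |p i - q i|)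
    (f := fun i => 2 * (q i * klFun (p i / q i))) (g := fun i => (p i + 2 * q i) / 3)
    (fun i hi => by
      have := klFun_nonneg (div_nonneg (hp i hi) (hq i hi))
      have := hq i hi
      positivity)
    (fun i hi => by have := hp i hi; have := hq i hi; positivity)
    (fun i hi => by
      have := three_mul_sq_sub_le_mul_klFun (hp i hi) (hq i hi) (hpq i hi)
      simp only [sq_abs]
      linarith)
  rwa [← sum_div, sum_add_distrib, ← mul_sum, ← mul_sum, hp1, hq1, ← hkl,
    show (1 + 2 * 1) / 3 = (1 : ℝ) by norm_num, mul_one] at hcs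

theorem sum_sq_sub_le_sum_mul_log_div {ι : Type*} (s : Finset ι) {p q : ι → ℝ}
    (hp : ∀ i ∈ s, 0 ≤ p i) (hq : ∀ i ∈ s, 0 ≤ q i) (hpq : ∀ i ∈ s, 0 < p i → 0 < q i)
    (hp1 : ∑ i ∈ s, p i = 1) (hq1 : ∑ i ∈ s, q i = 1) :
    ∑ i ∈ s, (p i - q i) ^ 2 ≤ ∑ i ∈ s, p i * log (p i / q i) := by
  have hsum : ∑ i ∈ s, (p i - q i) = 0 := by rw [sum_sub_distrib, hp1, hq1, sub_self]
  have := pinsker s hp hq hpq hp1 hq1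
  linarith [sum_sq_le_sq_sum_abs_div_two s _ hsum]

lemma List.ofFn_snoc {α : Type*} {n : ℕ} (f : Fin n → α) (a : α) :
    List.ofFn (Fin.snoc f a : Fin (n + 1) → α) = List.ofFn f ++ [a] := by
  rw [List.ofFn_succ']
  simp only [Fin.snoc_castSucc, Fin.snoc_last, List.concat_eq_append]

lemma Fintype.sum_ofFn_succ {α M : Type*} [Fintype α] [AddCommMonoid M] {n : ℕ} (f : List α → M) :
    ∑ x : Fin (n + 1) → α, f (List.ofFn x) = ∑ y : Fin n → α, ∑ a : α, f (List.ofFn y ++ [a]) := by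
  rw [← (Fin.snocEquiv fun _ => α).sum_comp, Fintype.sum_prod_type, Finset.sum_comm]
  exact Finset.sum_congr rfl fun y _ =>
    Finset.sum_congr rfl fun a _ => congrArg f (List.ofFn_snoc y a)

/-- `ρ l` is the probability that the sequence begins with `l`. -/
structure IsSeqMeasure {A : Type} [Fintype A] (ρ : List A → ℝ) : Prop where
  nonneg : ∀ l, 0 ≤ ρ l
  nil : ρ [] = 1
  sum_append_singleton : ∀ l, ∑ a, ρ (l ++ [a]) = ρ l

namespace IsSeqMeasure

variable {A : Type} [Fintype A] {ρ : List A → ℝ}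

lemma append_singleton_le (hρ : IsSeqMeasure ρ) (l : List A) (a : A) : ρ (l ++ [a]) ≤ ρ l :=
  hρ.sum_append_singleton l ▸
    single_le_sum (f := fun b => ρ (l ++ [b])) (fun _ _ => hρ.nonneg _) (mem_univ a)

lemma le_one (hρ : IsSeqMeasure ρ) (l : List A) : ρ l ≤ 1 := by
  induction l using List.reverseRecOn with
  | nil => exact hρ.nil.le
  | append_singleton l a ih => exact (hρ.append_singleton_le l a).trans ih

lemma condP_nonneg (hρ : IsSeqMeasure ρ) (l : List A) (a : A) : 0 ≤ condP ρ l a :=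
  div_nonneg (hρ.nonneg _) (hρ.nonneg _)

lemma sum_condP (hρ : IsSeqMeasure ρ) {l : List A} (hl : ρ l ≠ 0) : ∑ a, condP ρ l a = 1 := by
  simp only [condP]
  rw [← sum_div, hρ.sum_append_singleton, div_self hl]

lemma sum_ofFn (hρ : IsSeqMeasure ρ) (n : ℕ) : ∑ x : Fin n → A, ρ (List.ofFn x) = 1 := by
  induction n with
  | zero => simp [hρ.nil]
  | succ n ih => simp only [Fintype.sum_ofFn_succ, hρ.sum_append_singleton, ih]

end IsSeqMeasure

section Mixture

variable {A : Type} [Fintype A] {ι : Type*} {μs : ι → List A → ℝ} {w : ι → ℝ}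

lemma summable_mul_of_isSeqMeasure (hμs : ∀ i, IsSeqMeasure (μs i)) (hw : ∀ i, 0 ≤ w i)
    (hw1 : Summable w) (l : List A) : Summable fun i => w i * μs i l :=
  hw1.of_nonneg_of_le (fun i => mul_nonneg (hw i) ((hμs i).nonneg l))
    (fun i => mul_le_of_le_one_right (hw i) ((hμs i).le_one l))

lemma isSeqMeasure_tsum_mul (hμs : ∀ i, IsSeqMeasure (μs i)) (hw : ∀ i, 0 ≤ w i)
    (hw1 : HasSum w 1) : IsSeqMeasure fun l => ∑' i, w i * μs i l where
  nonneg l := tsum_nonneg fun i => mul_nonneg (hw i) ((hμs i).nonneg l)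
  nil := by simp only [fun i => (hμs i).nil, mul_one, hw1.tsum_eq]
  sum_append_singleton l := by
    rw [← Summable.tsum_finsetSum fun a _ => summable_mul_of_isSeqMeasure hμs hw hw1.summable _]
    simp only [← mul_sum, fun i => (hμs i).sum_append_singleton]

lemma mul_le_tsum_mul (hμs : ∀ i, IsSeqMeasure (μs i)) (hw : ∀ i, 0 ≤ w i) (hw1 : Summable w)
    (i : ι) (l : List A) : w i * μs i l ≤ ∑' j, w j * μs j l :=
  (summable_mul_of_isSeqMeasure hμs hw hw1 l).le_tsum i
    fun j _ => mul_nonneg (hw j) ((hμs j).nonneg l)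

end Mixture

section Divergence

variable {A : Type} [Fintype A] {μ ξ : List A → ℝ}

lemma sum_mul_log_div_append_singleton (hμ : IsSeqMeasure μ) (hac : ∀ l, 0 < μ l → 0 < ξ l)
    (l : List A) :
    ∑ a, μ (l ++ [a]) * log (μ (l ++ [a]) / ξ (l ++ [a])) =
      μ l * log (μ l / ξ l) + μ l * ∑ a, condP μ l a * log (condP μ l a / condP ξ l a) := by
  have hμl : μ l * log (μ l / ξ l) = ∑ a, μ (l ++ [a]) * log (μ l / ξ l) := by
    rw [← sum_mul, hμ.sum_append_singleton]
  rw [hμl, mul_sum, ← sum_add_distrib]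
  refine sum_congr rfl fun a _ => ?_
  rcases (hμ.nonneg (l ++ [a])).eq_or_lt with ha | ha
  · simp [condP, ← ha]
  · have hl := ha.trans_le (hμ.append_singleton_le l a)
    have hξa := hac _ ha
    have hξl := hac _ hl
    have hratio : μ (l ++ [a]) / μ l / (ξ (l ++ [a]) / ξ l) =
        μ (l ++ [a]) / ξ (l ++ [a]) / (μ l / ξ l) := by
      field_simp
    simp only [condP]
    rw [hratio, log_div (div_pos ha hξa).ne' (div_pos hl hξl).ne', ← mul_assoc,
      mul_div_cancel₀ _ hl.ne']
    ring

lemma relEnt_eq_sum_mul_log_div (hμ : IsSeqMeasure μ) (hξ : ξ [] = 1)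
    (hac : ∀ l, 0 < μ l → 0 < ξ l) (n : ℕ) :
    relEnt μ ξ n = ∑ x : Fin n → A, μ (List.ofFn x) * log (μ (List.ofFn x) / ξ (List.ofFn x)) := by
  induction n with
  | zero => simp [relEnt, hμ.nil, hξ]
  | succ n ih =>
    rw [relEnt, sum_range_succ, ← relEnt, ih,
      Fintype.sum_ofFn_succ (fun l => μ l * log (μ l / ξ l)), ← sum_add_distrib]
    exact sum_congr rfl fun x _ => (sum_mul_log_div_append_singleton hμ hac _).symm

lemma relEnt_le_log_one_div (hμ : IsSeqMeasure μ) (hξ : ξ [] = 1) {c : ℝ} (hc : 0 < c)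
    (hdom : ∀ l, c * μ l ≤ ξ l) (n : ℕ) : relEnt μ ξ n ≤ log (1 / c) := by
  have hac : ∀ l, 0 < μ l → 0 < ξ l := fun l hl => (mul_pos hc hl).trans_le (hdom l)
  rw [relEnt_eq_sum_mul_log_div hμ hξ hac]
  calc _ ≤ ∑ x : Fin n → A, μ (List.ofFn x) * log (1 / c) := by
        refine sum_le_sum fun x _ => ?_
        rcases (hμ.nonneg (List.ofFn x)).eq_or_lt with hl | hl
        · simp [← hl]
        refine mul_le_mul_of_nonneg_left (log_le_log (div_pos hl (hac _ hl)) ?_) hl.le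
        rw [div_le_div_iff₀ (hac _ hl) hc]
        linarith [hdom (List.ofFn x)]
    _ = log (1 / c) := by rw [← sum_mul, hμ.sum_ofFn, one_mul]

lemma mul_sum_sq_condP_sub_le (hμ : IsSeqMeasure μ) (hξ : IsSeqMeasure ξ)
    (hac : ∀ l, 0 < μ l → 0 < ξ l) (l : List A) :
    μ l * ∑ a, (condP μ l a - condP ξ l a) ^ 2 ≤
      μ l * ∑ a, condP μ l a * log (condP μ l a / condP ξ l a) := by
  rcases (hμ.nonneg l).eq_or_lt with hl | hl
  · simp [← hl]
  refine mul_le_mul_of_nonneg_left (sum_sq_sub_le_sum_mul_log_div univ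
    (fun a _ => hμ.condP_nonneg l a) (fun a _ => hξ.condP_nonneg l a) (fun a _ ha => ?_)
    (hμ.sum_condP hl.ne') (hξ.sum_condP (hac l hl).ne')) hl.le
  exact div_pos (hac _ ((div_pos_iff_of_pos_right hl).mp ha)) (hac l hl)

lemma sum_range_sum_mul_sum_sq_condP_sub_le_relEnt (hμ : IsSeqMeasure μ) (hξ : IsSeqMeasure ξ)
    (hac : ∀ l, 0 < μ l → 0 < ξ l) (n : ℕ) :
    ∑ k ∈ range n, ∑ x : Fin k → A, μ (List.ofFn x) *
        ∑ a, (condP μ (List.ofFn x) a - condP ξ (List.ofFn x) a) ^ 2 ≤ relEnt μ ξ n :=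
  sum_le_sum fun _ _ => sum_le_sum fun x _ => mul_sum_sq_condP_sub_le hμ hξ hac (List.ofFn x)

end Divergence

/-- Convergence in mean square: the cumulative μ-expected squared difference of the
conditional probabilities of μ and ξ is bounded by H_n ≤ ln(1/w_μ) < ∞; in particular
the infinite sum over k of the expected squared differences is finite (summable). -/
theorem mean_square_convergence {A : Type} [Fintype A]
    (μs : ℕ → List A → ℝ) (w : ℕ → ℝ)
    (hwpos : ∀ i, 0 < w i) (hwsum : HasSum w 1)
    (hnn : ∀ i l, 0 ≤ μs i l)
    (hroot : ∀ i, μs i [] = 1)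
    (hcompat : ∀ i l, ∑ a : A, μs i (l ++ [a]) = μs i l)
    (ξ : List A → ℝ) (hξ : ∀ l, ξ l = ∑' i, w i * μs i l)
    (i0 : ℕ)
    :
    (∀ n : ℕ,
      (∑ k ∈ Finset.range n, ∑ x : Fin k → A, μs i0 (List.ofFn x) *
          ∑ a : A, (condP (μs i0) (List.ofFn x) a - condP ξ (List.ofFn x) a) ^ 2) ≤
        relEnt (μs i0) ξ n ∧
      relEnt (μs i0) ξ n ≤ Real.log (1 / w i0)) ∧
    Summable (fun k : ℕ => ∑ x : Fin k → A, μs i0 (List.ofFn x) *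
        ∑ a : A, (condP (μs i0) (List.ofFn x) a - condP ξ (List.ofFn x) a) ^ 2) := by
  have hμs : ∀ i, IsSeqMeasure (μs i) := fun i => ⟨hnn i, hroot i, hcompat i⟩
  have hw : ∀ i, 0 ≤ w i := fun i => (hwpos i).le
  obtain rfl : ξ = fun l => ∑' i, w i * μs i l := funext hξ
  have hξm := isSeqMeasure_tsum_mul hμs hw hwsum
  have hdom : ∀ l, w i0 * μs i0 l ≤ ∑' i, w i * μs i l :=
    mul_le_tsum_mul hμs hw hwsum.summable i0
  have hac : ∀ l, 0 < μs i0 l → 0 < ∑' i, w i * μs i l :=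
    fun l hl => (mul_pos (hwpos i0) hl).trans_le (hdom l)
  have hbound : ∀ n, _ ∧ _ := fun n =>
    ⟨sum_range_sum_mul_sum_sq_condP_sub_le_relEnt (hμs i0) hξm hac n,
      relEnt_le_log_one_div (hμs i0) hξm.nil (hwpos i0) hdom n⟩
  refine ⟨hbound, summable_of_sum_range_le (fun k => ?_) fun n => (hbound n).1.trans (hbound n).2⟩
  exact sum_nonneg fun x _ => mul_nonneg ((hμs i0).nonneg _) (sum_nonneg fun a _ => sq_nonneg _)
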